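/- Non-symmetric bifurcation requires L < 0: if r* > 0 satisfies r* = V((K+L)r*) and 1/(K−L) = V'((K+L)r*), with K+L > 2, then L < 0. -/

import Mathlib

open Real MeasureTheory intervalIntegral

noncomputable def V (x : ℝ) : ℝ :=
  (∫ θ in (0:ℝ)..(2*π), Real.cos θ * Real.exp (x * Real.cos θ)) /
  (∫ θ in (0:ℝ)..(2*π), Real.exp (x * Real.cos θ))

/-!
Write `Mₙ(x) = ∫₀^{2π} cosⁿθ e^{x cos θ} dθ`, so that `V = M₁ / M₀` and `Mₙ' = Mₙ₊₁`.
Then `V' = (M₀M₂ - M₁²)/M₀²` is positive (a variance), and integrating `(sin θ e^{x cos θ})'`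
over a period gives `M₁ = x (M₀ - M₂)`, hence `V(x)/x - V'(x) = (M₀² + M₁² - 2M₀M₂)/M₀²`.
The numerator vanishes at `0` and has derivative `2M₀(M₁ - M₃) > 0` for `x > 0`, which is the
strict concavity bound `V'(x) < V(x)/x`. At `x = (K+L)r*` this reads `1/(K-L) < 1/(K+L)`.
-/

noncomputable def cosMoment (n : ℕ) (x : ℝ) : ℝ :=
  ∫ θ in (0:ℝ)..(2*π), Real.cos θ ^ n * Real.exp (x * Real.cos θ)

lemma intervalIntegrable_cosMoment_integrand (n : ℕ) (x a b : ℝ) :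
    IntervalIntegrable (fun θ => Real.cos θ ^ n * Real.exp (x * Real.cos θ)) volume a b :=
  Continuous.intervalIntegrable (by fun_prop) a b

lemma hasDerivAt_cosMoment (n : ℕ) (x : ℝ) :
    HasDerivAt (cosMoment n) (cosMoment (n + 1) x) x := by
  refine (hasDerivAt_integral_of_dominated_loc_of_deriv_le
    (F' := fun y θ => Real.cos θ ^ (n + 1) * Real.exp (y * Real.cos θ))
    (bound := fun _ => Real.exp (|x| + 1)) (Metric.ball_mem_nhds x one_pos)
    (.of_forall fun y => (intervalIntegrable_cosMoment_integrand n y 0 (2*π)).def'.1)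
    (intervalIntegrable_cosMoment_integrand n x 0 (2*π))
    (intervalIntegrable_cosMoment_integrand (n + 1) x 0 (2*π)).def'.1
    (.of_forall fun θ _ y hy => ?_) intervalIntegrable_const
    (.of_forall fun θ _ y _ => ?_)).2
  · have hy : |y| ≤ |x| + 1 := by
      have := abs_sub_abs_le_abs_sub y x
      rw [← Real.dist_eq] at this
      linarith [Metric.mem_ball.1 hy]
    have hcos := abs_cos_le_one θ
    rw [norm_mul, norm_pow, Real.norm_eq_abs, Real.norm_eq_abs, abs_exp]
    calc |Real.cos θ| ^ (n + 1) * Real.exp (y * Real.cos θ) ≤ 1 * Real.exp (|x| + 1) := by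
          gcongr
          · exact pow_le_one₀ (abs_nonneg _) hcos
          · calc y * Real.cos θ ≤ |y| * |Real.cos θ| := by rw [← abs_mul]; exact le_abs_self _
              _ ≤ |x| + 1 := by nlinarith [abs_nonneg y, abs_nonneg (Real.cos θ)]
      _ = Real.exp (|x| + 1) := one_mul _
  · exact (((hasDerivAt_mul_const (Real.cos θ)).exp (x := y)).const_mul
      (Real.cos θ ^ n)).congr_deriv (by ring)

lemma cosMoment_zero_pos (x : ℝ) : 0 < cosMoment 0 x :=
  intervalIntegral_pos_of_pos (intervalIntegrable_cosMoment_integrand 0 x 0 (2*π))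
    (fun θ => by positivity) (by positivity)

lemma cosMoment_sub_cosMoment_add_two (n : ℕ) (x : ℝ) :
    cosMoment n x - cosMoment (n + 2) x =
      ∫ θ in (0:ℝ)..(2*π), Real.sin θ ^ 2 * Real.cos θ ^ n * Real.exp (x * Real.cos θ) := by
  rw [cosMoment, cosMoment, ← integral_sub (intervalIntegrable_cosMoment_integrand n x 0 (2*π))
    (intervalIntegrable_cosMoment_integrand (n + 2) x 0 (2*π))]
  refine integral_congr fun θ _ => ?_
  linear_combination (-(Real.cos θ ^ n * Real.exp (x * Real.cos θ))) * sin_sq_add_cos_sq θ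

/-- Integration by parts against `(e^{x cos θ})' = -x sin θ e^{x cos θ}`. -/
lemma cosMoment_one_eq (x : ℝ) : cosMoment 1 x = x * (cosMoment 0 x - cosMoment 2 x) := by
  have hderiv : ∀ θ ∈ Set.uIcc (0:ℝ) (2*π),
      HasDerivAt (fun θ => Real.sin θ * Real.exp (x * Real.cos θ))
      (Real.cos θ ^ 1 * Real.exp (x * Real.cos θ) -
        x * (Real.sin θ ^ 2 * Real.cos θ ^ 0 * Real.exp (x * Real.cos θ))) θ := fun θ _ =>
    ((hasDerivAt_sin θ).mul ((hasDerivAt_cos θ).const_mul x).exp).congr_deriv (by ring)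
  have hper :=
    integral_eq_sub_of_hasDerivAt hderiv (Continuous.intervalIntegrable (by fun_prop) _ _)
  rw [integral_sub (intervalIntegrable_cosMoment_integrand 1 x 0 (2*π))
    (Continuous.intervalIntegrable (by fun_prop) _ _), intervalIntegral.integral_const_mul,
    ← cosMoment_sub_cosMoment_add_two, sin_two_pi, sin_zero] at hper
  simp only [zero_mul, sub_zero] at hper
  rw [cosMoment]
  linarith

lemma intervalIntegral_pos_of_continuous_nonneg {f : ℝ → ℝ} (hf : Continuous f) (hf0 : 0 ≤ f)
    {a b c : ℝ} (hc : c ∈ Set.Ioo a b) (hfc : 0 < f c) : 0 < ∫ θ in a..b, f θ := by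
  rw [integral_pos_iff_support_of_nonneg_ae (.of_forall hf0) (hf.intervalIntegrable a b)]
  refine ⟨hc.1.trans hc.2, ?_⟩
  calc (0 : ENNReal) < volume (Function.support f ∩ Set.Ioo a b) :=
        (hf.isOpen_support.inter isOpen_Ioo).measure_pos volume ⟨c, hfc.ne', hc⟩
    _ ≤ volume (Function.support f ∩ Set.Ioc a b) :=
        measure_mono (Set.inter_subset_inter_right _ Set.Ioo_subset_Ioc_self)

lemma mul_sinh_mul_nonneg {y : ℝ} (hy : 0 ≤ y) (t : ℝ) : 0 ≤ t * sinh (y * t) := by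
  rcases le_total 0 t with ht | ht
  · exact mul_nonneg ht (sinh_nonneg_iff.2 (mul_nonneg hy ht))
  · exact mul_nonneg_of_nonpos_of_nonpos ht
      (sinh_nonpos_iff.2 (mul_nonpos_of_nonneg_of_nonpos hy ht))

/-- Pairing `θ` with `θ + π` turns the integrand into `2 sin²θ cos θ sinh (y cos θ) ≥ 0`. -/
lemma cosMoment_one_sub_cosMoment_three_pos {y : ℝ} (hy : 0 < y) :
    0 < cosMoment 1 y - cosMoment 3 y := by
  set f : ℝ → ℝ := fun θ => Real.sin θ ^ 2 * Real.cos θ ^ 1 * Real.exp (y * Real.cos θ)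
  have hf : Continuous f := by fun_prop
  have hfold : (∫ θ in (0:ℝ)..(2*π), f θ) =
      ∫ θ in (0:ℝ)..π, 2 * Real.sin θ ^ 2 * (Real.cos θ * sinh (y * Real.cos θ)) := by
    have hshift : ∫ θ in π..(2*π), f θ = ∫ θ in (0:ℝ)..π, f (θ + π) := by
      rw [integral_comp_add_right]
      norm_num [two_mul]
    rw [← integral_add_adjacent_intervals (hf.intervalIntegrable 0 π) (hf.intervalIntegrable π _),
      hshift, ← integral_add (hf.intervalIntegrable 0 π) (g := fun θ => f (θ + π))
      ((hf.comp (continuous_add_const π)).intervalIntegrable _ _)]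
    refine integral_congr fun θ _ => ?_
    simp only [f, sin_add_pi, cos_add_pi, sinh_eq]
    ring_nf
  rw [cosMoment_sub_cosMoment_add_two, hfold]
  have hc : π / 3 ∈ Set.Ioo 0 π := ⟨by positivity, by linarith [pi_pos]⟩
  refine intervalIntegral_pos_of_continuous_nonneg (by fun_prop)
    (fun θ => by have := mul_sinh_mul_nonneg hy.le (Real.cos θ); positivity) hc ?_
  have hs : 0 < Real.sin (π / 3) := sin_pos_of_pos_of_lt_pi hc.1 hc.2
  rw [cos_pi_div_three]
  have : 0 < sinh (y * (1 / 2)) := sinh_pos_iff.2 (by positivity)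
  positivity

lemma integral_cos_sub_sq_mul_exp_pos (x t : ℝ) :
    0 < ∫ θ in (0:ℝ)..(2*π), (Real.cos θ - t) ^ 2 * Real.exp (x * Real.cos θ) := by
  obtain ⟨c, hc, hct⟩ : ∃ c ∈ Set.Ioo 0 (2 * π), Real.cos c ≠ t := by
    by_cases ht : t = 0
    · exact ⟨π, ⟨pi_pos, by linarith [pi_pos]⟩, by rw [cos_pi, ht]; norm_num⟩
    · exact ⟨π / 2, ⟨by positivity, by linarith [pi_pos]⟩, by rw [cos_pi_div_two]; exact Ne.symm ht⟩
  refine intervalIntegral_pos_of_continuous_nonneg (by fun_prop) (fun θ => by positivity) hc ?_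
  have := sub_ne_zero.2 hct
  positivity

lemma integral_cos_sub_sq_mul_exp_eq (x t : ℝ) :
    ∫ θ in (0:ℝ)..(2*π), (Real.cos θ - t) ^ 2 * Real.exp (x * Real.cos θ) =
      cosMoment 2 x - 2 * t * cosMoment 1 x + t ^ 2 * cosMoment 0 x := by
  have hI := intervalIntegrable_cosMoment_integrand
  rw [cosMoment, cosMoment, cosMoment, ← intervalIntegral.integral_const_mul,
    ← intervalIntegral.integral_const_mul,
    ← integral_sub (hI 2 x 0 _) ((hI 1 x 0 _).const_mul _),
    ← integral_add ((hI 2 x 0 _).sub ((hI 1 x 0 _).const_mul _)) ((hI 0 x 0 _).const_mul _)]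
  exact integral_congr fun θ _ => by ring

lemma cosMoment_mul_sub_sq_pos (x : ℝ) :
    0 < cosMoment 0 x * cosMoment 2 x - cosMoment 1 x ^ 2 := by
  have h0 := cosMoment_zero_pos x
  have hvar := integral_cos_sub_sq_mul_exp_pos x (cosMoment 1 x / cosMoment 0 x)
  rw [integral_cos_sub_sq_mul_exp_eq] at hvar
  have hfactor : cosMoment 0 x * cosMoment 2 x - cosMoment 1 x ^ 2 = cosMoment 0 x *
      (cosMoment 2 x - 2 * (cosMoment 1 x / cosMoment 0 x) * cosMoment 1 x +
        (cosMoment 1 x / cosMoment 0 x) ^ 2 * cosMoment 0 x) := by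
    field_simp
    ring
  rw [hfactor]
  positivity

lemma cosMoment_concavity_gap_pos {x : ℝ} (hx : 0 < x) :
    0 < cosMoment 0 x ^ 2 + cosMoment 1 x ^ 2 - 2 * (cosMoment 0 x * cosMoment 2 x) := by
  set F : ℝ → ℝ := fun y =>
    cosMoment 0 y ^ 2 + cosMoment 1 y ^ 2 - 2 * (cosMoment 0 y * cosMoment 2 y)
  have hF : ∀ y, HasDerivAt F (2 * cosMoment 0 y * (cosMoment 1 y - cosMoment 3 y)) y := fun y =>
    ((((hasDerivAt_cosMoment 0 y).pow 2).add ((hasDerivAt_cosMoment 1 y).pow 2)).sub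
      (((hasDerivAt_cosMoment 0 y).mul (hasDerivAt_cosMoment 2 y)).const_mul 2)).congr_deriv
      (by norm_num; ring)
  have hF0 : F 0 = 0 := by
    have h0 : cosMoment 0 0 = 2 * π := by simp [cosMoment]
    have h2 : cosMoment 2 0 = π := by simp [cosMoment, integral_cos_sq]
    simp only [F, cosMoment_one_eq 0, h0, h2]
    ring
  have hmono : StrictMonoOn F (Set.Ici 0) := by
    refine strictMonoOn_of_deriv_pos (convex_Ici 0)
      (fun y _ => (hF y).continuousAt.continuousWithinAt) fun y hy => ?_
    rw [interior_Ici] at hy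
    rw [(hF y).deriv]
    have := cosMoment_one_sub_cosMoment_three_pos hy
    have := cosMoment_zero_pos y
    positivity
  exact hF0 ▸ hmono Set.self_mem_Ici hx.le hx

lemma V_eq_div (x : ℝ) : V x = cosMoment 1 x / cosMoment 0 x := by
  simp [V, cosMoment]

lemma hasDerivAt_V (x : ℝ) :
    HasDerivAt V ((cosMoment 0 x * cosMoment 2 x - cosMoment 1 x ^ 2) / cosMoment 0 x ^ 2) x := by
  rw [show V = fun y => cosMoment 1 y / cosMoment 0 y from funext V_eq_div]
  exact ((hasDerivAt_cosMoment 1 x).div (hasDerivAt_cosMoment 0 x)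
    (cosMoment_zero_pos x).ne').congr_deriv (by ring)

lemma deriv_V_pos (x : ℝ) : 0 < deriv V x := by
  rw [(hasDerivAt_V x).deriv]
  have := cosMoment_mul_sub_sq_pos x
  have := cosMoment_zero_pos x
  positivity

lemma deriv_V_lt_V_div {x : ℝ} (hx : 0 < x) : deriv V x < V x / x := by
  have h0 := cosMoment_zero_pos x
  have hgap := cosMoment_concavity_gap_pos hx
  have hVx : V x / x = (cosMoment 0 x - cosMoment 2 x) / cosMoment 0 x := by
    rw [V_eq_div, cosMoment_one_eq]
    field_simp
  rw [(hasDerivAt_V x).deriv, hVx, div_lt_div_iff₀ (by positivity) h0]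
  nlinarith [mul_pos h0 hgap]

theorem bifurcation_needs_negative_L (K L rs : ℝ)
    (hrs : 0 < rs) (hKL : K + L > 2)
    (e : rs = V ((K + L) * rs))
    (hd : 1 / (K - L) = deriv V ((K + L) * rs)) :
    L < 0 := by
  have hsum : 0 < K + L := by linarith
  have hx : 0 < (K + L) * rs := by positivity
  have hdiff : 0 < K - L := one_div_pos.1 (hd ▸ deriv_V_pos _)
  have hlt : 1 / (K - L) < 1 / (K + L) := by
    have := deriv_V_lt_V_div hx
    rwa [← e, div_mul_cancel_right₀ hrs.ne', ← one_div, ← hd] at this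
  rw [div_lt_div_iff₀ hdiff hsum] at hlt
  linarith
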